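/- Let F : ℂⁿ → ℂ be real-differentiable at a point z. Then fderiv ℝ F z : ℂⁿ → ℂ is not surjective if and only if there exists λ ∈ ℂ with |λ| = 1 such that conj(∂F(z)) = λ·∂̄F(z) as vectors in ℂⁿ, where ∂F(z) and ∂̄F(z) are the Wirtinger gradients of F at z. (Characterisation (2.2) of the singular locus of a mixed function; it follows from Lemma 2.1, since the real 2-plane {μ·conj(∂F(z)) + conj(μ)·∂̄F(z) : μ ∈ ℂ} degenerates exactly under this condition.) -/

import Mathlib

open Complex Filter Function Metric

noncomputable section

/-- `ℂⁿ` with its Euclidean (Hermitian) norm. -/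
abbrev Cn (n : ℕ) := EuclideanSpace ℂ (Fin n)

/-- Componentwise complex conjugate of a vector in `ℂⁿ`. -/
def conjVec {n : ℕ} (v : Cn n) : Cn n := WithLp.toLp 2 (fun k => starRingEnd ℂ (v k))

/-- The Wirtinger gradient `∂F(z)`, with components
`∂F/∂z_k(z) = ½(L(e_k) − i·L(i·e_k))` where `L = fderiv ℝ F z`. -/
def wirtD {n : ℕ} (F : Cn n → ℂ) (z : Cn n) : Cn n :=
  WithLp.toLp 2 (fun k => (1 / 2 : ℂ) * (fderiv ℝ F z (EuclideanSpace.single k 1)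
    - Complex.I * fderiv ℝ F z (EuclideanSpace.single k Complex.I)))

/-- The Wirtinger gradient `∂̄F(z)`, with components
`∂F/∂z̄_k(z) = ½(L(e_k) + i·L(i·e_k))` where `L = fderiv ℝ F z`. -/
def wirtDBar {n : ℕ} (F : Cn n → ℂ) (z : Cn n) : Cn n :=
  WithLp.toLp 2 (fun k => (1 / 2 : ℂ) * (fderiv ℝ F z (EuclideanSpace.single k 1)
    + Complex.I * fderiv ℝ F z (EuclideanSpace.single k Complex.I)))

/-!
With `L = fderiv ℝ F z` one has `L v = ⟪conj ∂F, v⟫ + conj ⟪∂̄F, v⟫`. An ℝ-linear map into the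
real plane `ℂ` fails to be onto iff some `ω ≠ 0` is orthogonal to its range, and
`Re (L v · conj ω) = Re ⟪ω • conj ∂F + conj ω • ∂̄F, v⟫`; so `L` is not onto iff
`ω • conj ∂F + conj ω • ∂̄F = 0` for some `ω ≠ 0`. That happens iff `conj ∂F = λ • ∂̄F` with
`|λ| = 1`: take `λ = -conj ω / ω`, and conversely `ω` a square root of `-conj λ`.
-/

open scoped InnerProductSpace ComplexConjugate

theorem LinearMap.not_surjective_iff_exists_ne_zero_inner_eq_zero {𝕜 M E : Type*} [RCLike 𝕜]
    [AddCommGroup M] [Module 𝕜 M] [NormedAddCommGroup E] [InnerProductSpace 𝕜 E]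
    [FiniteDimensional 𝕜 E] (L : M →ₗ[𝕜] E) :
    ¬ Surjective L ↔ ∃ ω ≠ (0 : E), ∀ v, ⟪ω, L v⟫_𝕜 = 0 := by
  rw [← LinearMap.range_eq_top, ← Submodule.orthogonal_eq_bot_iff, ← ne_eq,
    Submodule.ne_bot_iff]
  simp only [Submodule.mem_orthogonal', LinearMap.mem_range, forall_exists_index,
    forall_apply_eq_imp_iff]
  exact exists_congr fun ω => and_comm

theorem forall_re_inner_eq_zero_iff {𝕜 E : Type*} [RCLike 𝕜] [NormedAddCommGroup E]
    [InnerProductSpace 𝕜 E] {w : E} : (∀ v, RCLike.re ⟪w, v⟫_𝕜 = 0) ↔ w = 0 := by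
  refine ⟨fun h => re_inner_self_nonpos.mp (h w).le, ?_⟩
  rintro rfl v
  simp

section ComplexInnerProductSpace

variable {E : Type*} [NormedAddCommGroup E] [InnerProductSpace ℂ E]

theorem re_inner_add_conj_inner_mul_conj (x b v : E) (ω : ℂ) :
    ((⟪x, v⟫_ℂ + conj ⟪b, v⟫_ℂ) * conj ω).re = (⟪ω • x + conj ω • b, v⟫_ℂ).re := by
  rw [inner_add_left, inner_smul_left, inner_smul_left, Complex.conj_conj, add_mul,
    Complex.add_re, Complex.add_re, ← Complex.conj_re (conj ⟪b, v⟫_ℂ * conj ω), map_mul,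
    Complex.conj_conj, Complex.conj_conj]
  ring_nf

theorem exists_smul_add_conj_smul_eq_zero_iff (x b : E) :
    (∃ ω ≠ (0 : ℂ), ω • x + conj ω • b = 0) ↔ ∃ lam : ℂ, ‖lam‖ = 1 ∧ x = lam • b := by
  constructor
  · rintro ⟨ω, hω, h⟩
    refine ⟨-(conj ω / ω), by simp [hω], ?_⟩
    calc x = ω⁻¹ • (ω • x) := (inv_smul_smul₀ hω x).symm
      _ = ω⁻¹ • -(conj ω • b) := by rw [eq_neg_of_add_eq_zero_left h]
      _ = -(conj ω / ω) • b := by rw [smul_neg, smul_smul, ← neg_smul, div_eq_inv_mul]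
  · rintro ⟨lam, hlam, rfl⟩
    obtain ⟨μ, hμ⟩ := IsAlgClosed.exists_pow_nat_eq (-conj lam) two_pos
    have hμ1 : ‖μ‖ = 1 := by
      have : ‖μ‖ ^ 2 = 1 := by rw [← norm_pow, hμ, norm_neg, Complex.norm_conj, hlam]
      exact (pow_eq_one_iff_of_nonneg (norm_nonneg μ) two_ne_zero).mp this
    have hμ0 : μ ≠ 0 := by rintro rfl; simp at hμ1
    have hcoeff : μ * (μ * lam + conj μ) = 0 := by
      rw [mul_add, ← mul_assoc, ← sq, hμ, Complex.mul_conj', hμ1, neg_mul, Complex.conj_mul',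
        hlam]
      norm_num
    refine ⟨μ, hμ0, ?_⟩
    rw [smul_smul, ← add_smul, (mul_eq_zero.mp hcoeff).resolve_left hμ0, zero_smul]

theorem LinearMap.not_surjective_iff_exists_norm_eq_one_eq_smul (L : E →ₗ[ℝ] ℂ) {x b : E}
    (hL : ∀ v, L v = ⟪x, v⟫_ℂ + conj ⟪b, v⟫_ℂ) :
    ¬ Surjective L ↔ ∃ lam : ℂ, ‖lam‖ = 1 ∧ x = lam • b := by
  rw [L.not_surjective_iff_exists_ne_zero_inner_eq_zero, ← exists_smul_add_conj_smul_eq_zero_iff]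
  refine exists_congr fun ω => and_congr_right fun _ => ?_
  simp only [Complex.inner, hL, re_inner_add_conj_inner_mul_conj]
  exact forall_re_inner_eq_zero_iff (𝕜 := ℂ)

end ComplexInnerProductSpace

theorem EuclideanSpace.sum_single {ι 𝕜 : Type*} [Fintype ι] [DecidableEq ι] [RCLike 𝕜]
    (v : EuclideanSpace 𝕜 ι) : ∑ k, EuclideanSpace.single k (v k) = v := by
  ext j
  simp [Finset.sum_apply]

theorem EuclideanSpace.single_eq_re_smul_add_im_smul {ι : Type*} [DecidableEq ι] (k : ι)
    (c : ℂ) :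
    EuclideanSpace.single k c =
      c.re • EuclideanSpace.single k 1 + c.im • EuclideanSpace.single k I := by
  ext j
  by_cases h : j = k <;> simp [h, Complex.real_smul]

theorem fderiv_apply_single {n : ℕ} (F : Cn n → ℂ) (z : Cn n) (k : Fin n) (c : ℂ) :
    fderiv ℝ F z (EuclideanSpace.single k c) = wirtD F z k * c + wirtDBar F z k * conj c := by
  rw [EuclideanSpace.single_eq_re_smul_add_im_smul, map_add, map_smul, map_smul]
  simp only [wirtD, wirtDBar, PiLp.toLp_apply, Complex.real_smul]
  conv_rhs => rw [← Complex.re_add_im c]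
  simp only [map_add, map_mul, Complex.conj_ofReal, Complex.conj_I]
  linear_combination (c.im : ℂ) * fderiv ℝ F z (EuclideanSpace.single k I) * Complex.I_sq

theorem fderiv_apply_eq_inner_add_conj_inner {n : ℕ} (F : Cn n → ℂ) (z v : Cn n) :
    fderiv ℝ F z v = ⟪conjVec (wirtD F z), v⟫_ℂ + conj ⟪wirtDBar F z, v⟫_ℂ := by
  conv_lhs => rw [← EuclideanSpace.sum_single v]
  simp only [map_sum, fderiv_apply_single, PiLp.inner_apply, conjVec, RCLike.inner_apply,
    Complex.conj_conj, ← Finset.sum_add_distrib, map_mul]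
  exact Finset.sum_congr rfl fun k _ => by ring

theorem not_surjective_iff_wirtinger_proportional_general
    {n : ℕ} (F : Cn n → ℂ) (z : Cn n) :
    ¬ Surjective ⇑(fderiv ℝ F z) ↔
      ∃ lam : ℂ, ‖lam‖ = 1 ∧ conjVec (wirtD F z) = lam • wirtDBar F z :=
  (fderiv ℝ F z).toLinearMap.not_surjective_iff_exists_norm_eq_one_eq_smul
    (fderiv_apply_eq_inner_add_conj_inner F z)

/-- **Characterisation (2.2) of the singular locus of a mixed function.**  For
`F : ℂⁿ → ℂ` real-differentiable at `z`, the derivative `fderiv ℝ F z : ℂⁿ → ℂ` fails to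
be surjective if and only if `conj(∂F(z)) = λ·∂̄F(z)` for some `λ ∈ ℂ` with `|λ| = 1`. -/
theorem not_surjective_iff_wirtinger_proportional
    {n : ℕ} (F : Cn n → ℂ) (z : Cn n) (hF : DifferentiableAt ℝ F z) :
    ¬ Surjective ⇑(fderiv ℝ F z) ↔
      ∃ lam : ℂ, ‖lam‖ = 1 ∧ conjVec (wirtD F z) = lam • wirtDBar F z :=
  not_surjective_iff_wirtinger_proportional_general F z
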